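/- arXiv:1708.03821 — 5 statements merged into one kernel-verified Lean document; each statement's English description precedes it below -/
import Mathlib

section
/- Let {X_n} be a Markov chain on states S = {A,B}^N with |X_{n+1}| − |X_n| ∈ {−1, 0, +1} almost surely, absorbing states all-A and all-B, and forward bias γ_s = p_{s;+}/p_{s;−} in each non-absorbing state s. If P is a birth-death chain on {0,…,N} with biases γ_m^P satisfying γ_m^P ≤ γ_s for every state s with |s| = m, then for every non-absorbing state s, the fixation probability satisfies ρ_s ≥ ρ_{|s|}^P, where ρ_{|s|}^P = f_P(|s|)/f_P(N) with f_P(m) = Σ_{k=0}^{m−1} (γ_1^P ⋯ γ_k^P)^{−1}. -/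
open Finset

/-- The number of mutants (coordinates equal to `true`, i.e. type `A`) in a state. -/
def mcount {N : ℕ} (s : Fin N → Bool) : ℕ := (univ.filter fun i => s i = true).card

/-- Comparison (sandwich) lemma, lower half.  Let `{X_n}` be a Markov chain on states
`{A,B}^N` which changes the mutant count by at most one per step, with absorbing states
all-A and all-B, self-loops removed in non-absorbing states, and forward bias
`γ_s = p_{s;+}/p_{s;−}`.  If `P` is a birth-death chain on `{0,…,N}` with biases
`γ_m^P ≤ γ_s` whenever `|s| = m`, then for every non-absorbing state `s` the fixation
probability satisfies `ρ_s ≥ ρ_{|s|}^P = f_P(|s|)/f_P(N)`, where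
`f_P(m) = Σ_{k=0}^{m−1} (γ_1^P ⋯ γ_k^P)⁻¹`. -/
theorem motion_comparison_lower (N : ℕ) (hN : 0 < N)
    (M : (Fin N → Bool) → (Fin N → Bool) → ℝ)
    (hMnonneg : ∀ s s', 0 ≤ M s s')
    (hMrow : ∀ s, ∑ s', M s s' = 1)
    (hstep : ∀ s s' : Fin N → Bool,
      1 < |(mcount s' : ℤ) - (mcount s : ℤ)| → M s s' = 0)
    (pplus pminus : (Fin N → Bool) → ℝ)
    (hpplus : ∀ s, pplus s = ∑ s' ∈ univ.filter fun s' => mcount s' = mcount s + 1, M s s')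
    (hpminus : ∀ s, pminus s = ∑ s' ∈ univ.filter fun s' => mcount s' + 1 = mcount s, M s s')
    (hppos : ∀ s, 0 < mcount s → mcount s < N → 0 < pplus s)
    (hmpos : ∀ s, 0 < mcount s → mcount s < N → 0 < pminus s)
    (hnolazy : ∀ s, 0 < mcount s → mcount s < N → pplus s + pminus s = 1)
    (γP : ℕ → ℝ)
    (hγPpos : ∀ m, 1 ≤ m → m ≤ N - 1 → 0 < γP m)
    (hbias : ∀ s, 0 < mcount s → mcount s < N → γP (mcount s) ≤ pplus s / pminus s)
    (ρ : (Fin N → Bool) → ℝ)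
    (hρ01 : ∀ s, 0 ≤ ρ s ∧ ρ s ≤ 1)
    (hρA : ρ (fun _ => true) = 1)
    (hρB : ρ (fun _ => false) = 0)
    (hρrec : ∀ s, 0 < mcount s → mcount s < N → ρ s = ∑ s', M s s' * ρ s')
    (fP : ℕ → ℝ)
    (hfP : ∀ m, fP m = ∑ k ∈ range m, (∏ j ∈ range k, γP (j + 1))⁻¹) :
    ∀ s, 0 < mcount s → mcount s < N → fP (mcount s) / fP N ≤ ρ s := by
  classical
  -- positivity of partial products
  have hπpos : ∀ k, k ≤ N - 1 → 0 < ∏ j ∈ range k, γP (j + 1) := by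
    intro k hk
    apply Finset.prod_pos
    intro j hj
    have hj' : j + 1 ≤ k := Nat.succ_le_of_lt (mem_range.mp hj)
    exact hγPpos (j + 1) (Nat.le_add_left 1 j) (hj'.trans hk)
  have hfPN : 0 < fP N := by
    rw [hfP]
    apply Finset.sum_pos
    · intro k hk
      exact inv_pos.mpr (hπpos k (Nat.le_pred_of_lt (mem_range.mp hk)))
    · exact nonempty_range_iff.mpr hN.ne'
  have hfP0 : fP 0 = 0 := by rw [hfP]; simp
  have hfPsucc : ∀ m, fP (m + 1) = fP m + (∏ j ∈ range m, γP (j + 1))⁻¹ := by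
    intro m; rw [hfP, hfP, Finset.sum_range_succ]
  set g : ℕ → ℝ := fun m => fP m / fP N with hg
  set h : (Fin N → Bool) → ℝ := fun t => ρ t - g (mcount t) with hh
  have hmle : ∀ t : Fin N → Bool, mcount t ≤ N := by
    intro t
    calc mcount t ≤ (univ : Finset (Fin N)).card := card_filter_le _ _
      _ = N := by simp
  have hmN : ∀ t : Fin N → Bool, mcount t = N → t = fun _ => true := by
    intro t ht
    have hsub : (univ.filter fun i => t i = true) = univ := by
      apply Finset.eq_of_subset_of_card_le (filter_subset _ _)
      have : (univ : Finset (Fin N)).card = N := by simp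
      rw [this]
      exact le_of_eq ht.symm
    funext i
    have hi : i ∈ univ.filter fun i => t i = true := by rw [hsub]; exact mem_univ i
    simpa using (mem_filter.mp hi).2
  -- the key convexity inequality for g
  have hgkey : ∀ (t : Fin N → Bool) (n : ℕ), mcount t = n + 1 → n + 1 < N →
      g (n + 1) ≤ pplus t * g (n + 1 + 1) + pminus t * g n := by
    intro t n hn hlt
    have hpos : 0 < mcount t := by omega
    have hltN : mcount t < N := by omega
    have hpm := hmpos t hpos hltN
    have hpp := hppos t hpos hltN
    have hlazy := hnolazy t hpos hltN
    have hγpos : 0 < γP (n + 1) := hγPpos (n + 1) (by omega) (by omega)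
    have hγ : γP (n + 1) * pminus t ≤ pplus t := by
      have hb := hbias t hpos hltN
      rw [hn] at hb
      rwa [le_div_iff₀ hpm] at hb
    have hπn : 0 < ∏ j ∈ range n, γP (j + 1) := hπpos n (by omega)
    have hprod : ∏ j ∈ range (n + 1), γP (j + 1)
        = (∏ j ∈ range n, γP (j + 1)) * γP (n + 1) := Finset.prod_range_succ _ _
    have h1 := hfPsucc n
    have h2 := hfPsucc (n + 1)
    have hineq : pminus t * (∏ j ∈ range n, γP (j + 1))⁻¹
        ≤ pplus t * (∏ j ∈ range (n + 1), γP (j + 1))⁻¹ := by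
      rw [hprod, mul_inv]
      have hstep' := mul_le_mul_of_nonneg_right hγ
        (by positivity : (0:ℝ) ≤ (∏ j ∈ range n, γP (j + 1))⁻¹ * (γP (n + 1))⁻¹)
      have e : γP (n + 1) * pminus t * ((∏ j ∈ range n, γP (j + 1))⁻¹ * (γP (n + 1))⁻¹)
          = pminus t * (∏ j ∈ range n, γP (j + 1))⁻¹ := by
        field_simp
      rw [← e]
      exact hstep'
    have e : pplus t * fP (n + 1 + 1) + pminus t * fP n
        = fP (n + 1) + (pplus t * (∏ j ∈ range (n + 1), γP (j + 1))⁻¹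
            - pminus t * (∏ j ∈ range n, γP (j + 1))⁻¹) := by
      rw [h2, h1]
      linear_combination (fP n + (∏ j ∈ range n, γP (j + 1))⁻¹) * hlazy
    have hfl : fP (n + 1) ≤ pplus t * fP (n + 1 + 1) + pminus t * fP n := by
      linarith [hineq, e]
    simp only [hg]
    calc fP (n + 1) / fP N ≤ (pplus t * fP (n + 1 + 1) + pminus t * fP n) / fP N := by
          gcongr
      _ = pplus t * (fP (n + 1 + 1) / fP N) + pminus t * (fP n / fP N) := by
          rw [add_div, mul_div_assoc, mul_div_assoc]
  -- the minimum of h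
  have hne : (univ : Finset (Fin N → Bool)).Nonempty := univ_nonempty
  set c : ℝ := univ.inf' hne h with hc
  have hcle : ∀ t, c ≤ h t := fun t => inf'_le h (mem_univ t)
  -- key step: a minimizer at an interior level has a minimizing neighbor one level up
  have keyA : ∀ t, 0 < mcount t → mcount t < N → h t ≤ c →
      ∃ t', mcount t' = mcount t + 1 ∧ h t' ≤ c := by
    intro t hpos hlt hhtc
    obtain ⟨n, hn⟩ : ∃ n, mcount t = n + 1 := ⟨mcount t - 1, by omega⟩
    have hn2 : n + 1 < N := by omega
    set A : Finset (Fin N → Bool) := univ.filter (fun s' => mcount s' = mcount t + 1) with hA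
    set B : Finset (Fin N → Bool) := univ.filter (fun s' => mcount s' + 1 = mcount t) with hB
    set R : Finset (Fin N → Bool) :=
      univ.filter (fun s' => ¬ mcount s' = mcount t + 1 ∧ ¬ mcount s' + 1 = mcount t) with hR
    have hdecomp : ∀ F : (Fin N → Bool) → ℝ,
        ∑ s', M t s' * F s'
          = ∑ s' ∈ A, M t s' * F s' + ∑ s' ∈ B, M t s' * F s' + ∑ s' ∈ R, M t s' * F s' := by
      intro F
      have e1 := Finset.sum_filter_add_sum_filter_not univ
        (fun s' => mcount s' = mcount t + 1) (fun s' => M t s' * F s')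
      have e2 := Finset.sum_filter_add_sum_filter_not
        (univ.filter (fun s' => ¬ mcount s' = mcount t + 1))
        (fun s' => mcount s' + 1 = mcount t) (fun s' => M t s' * F s')
      rw [filter_filter, filter_filter] at e2
      have eB : univ.filter (fun s' => ¬ mcount s' = mcount t + 1 ∧ mcount s' + 1 = mcount t)
          = B := by
        rw [hB]
        apply Finset.filter_congr
        intro x _
        omega
      rw [eB] at e2
      rw [hA, hR]
      linarith [e1, e2]
    -- the remainder set carries no mass
    have hRzero : ∑ s' ∈ R, M t s' = 0 := by
      have e := hdecomp (fun _ => 1)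
      simp only [mul_one] at e
      rw [hMrow t] at e
      have hApl : ∑ s' ∈ A, M t s' = pplus t := (hpplus t).symm
      have hBpl : ∑ s' ∈ B, M t s' = pminus t := (hpminus t).symm
      have hlazy := hnolazy t hpos hlt
      linarith [e, hApl, hBpl, hlazy]
    have hMz : ∀ s' ∈ R, M t s' = 0 := by
      intro s' hs'
      exact (Finset.sum_eq_zero_iff_of_nonneg (fun x _ => hMnonneg t x)).mp hRzero s' hs'
    -- split the harmonic identity
    have hsplit : ∀ F : ℕ → ℝ,
        ∑ s', M t s' * F (mcount s')
          = pplus t * F (mcount t + 1) + pminus t * F n := by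
      intro F
      rw [hdecomp (fun s' => F (mcount s'))]
      have eA : ∑ s' ∈ A, M t s' * F (mcount s') = pplus t * F (mcount t + 1) := by
        rw [show (∑ s' ∈ A, M t s' * F (mcount s'))
            = ∑ s' ∈ A, M t s' * F (mcount t + 1) from
          Finset.sum_congr rfl (fun x hx => by
            rw [hA] at hx
            rw [(mem_filter.mp hx).2])]
        rw [← Finset.sum_mul, hA, ← hpplus t, mul_comm]
      have eB : ∑ s' ∈ B, M t s' * F (mcount s') = pminus t * F n := by
        rw [show (∑ s' ∈ B, M t s' * F (mcount s'))
            = ∑ s' ∈ B, M t s' * F n from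
          Finset.sum_congr rfl (fun x hx => by
            rw [hB] at hx
            have := (mem_filter.mp hx).2
            have : mcount x = n := by omega
            rw [this])]
        rw [← Finset.sum_mul, hB, ← hpminus t, mul_comm]
      have eR : ∑ s' ∈ R, M t s' * F (mcount s') = 0 :=
        Finset.sum_eq_zero (fun x hx => by rw [hMz x hx, zero_mul])
      rw [eA, eB, eR, add_zero]
    -- main estimate
    have hρeq : ρ t = ∑ s', M t s' * ρ s' := hρrec t hpos hlt
    have hsum_split : ∑ s', M t s' * ρ s'
        = ∑ s', M t s' * g (mcount s') + ∑ s', M t s' * h s' := by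
      rw [← Finset.sum_add_distrib]
      apply Finset.sum_congr rfl
      intro s' _
      simp only [hh]
      ring
    have hgs : ∑ s', M t s' * g (mcount s') = pplus t * g (mcount t + 1) + pminus t * g n :=
      hsplit g
    have hkey2 : g (mcount t) ≤ pplus t * g (mcount t + 1) + pminus t * g n := by
      rw [hn]
      exact hgkey t n hn hn2
    have hht : h t = ρ t - g (mcount t) := rfl
    have hMh_le : ∑ s', M t s' * h s' ≤ c := by
      have e : ρ t = (pplus t * g (mcount t + 1) + pminus t * g n) + ∑ s', M t s' * h s' := by
        rw [hρeq, hsum_split, hgs]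
      linarith [e, hkey2, hhtc, hht]
    have hMh_ge : c ≤ ∑ s', M t s' * h s' := by
      calc c = (∑ s', M t s') * c := by rw [hMrow t, one_mul]
        _ = ∑ s', M t s' * c := by rw [Finset.sum_mul]
        _ ≤ ∑ s', M t s' * h s' :=
            Finset.sum_le_sum (fun s' _ => mul_le_mul_of_nonneg_left (hcle s') (hMnonneg t s'))
    have heq : ∑ s', M t s' * (h s' - c) = 0 := by
      have e : ∑ s', M t s' * (h s' - c) = (∑ s', M t s' * h s') - c := by
        simp only [mul_sub]
        rw [Finset.sum_sub_distrib, ← Finset.sum_mul, hMrow t, one_mul]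
      linarith [e, hMh_le, hMh_ge]
    have hz : ∀ s' ∈ (univ : Finset (Fin N → Bool)), M t s' * (h s' - c) = 0 :=
      (Finset.sum_eq_zero_iff_of_nonneg
        (fun s' _ => mul_nonneg (hMnonneg t s') (sub_nonneg.mpr (hcle s')))).mp heq
    have hpp : 0 < pplus t := hppos t hpos hlt
    obtain ⟨t', ht'mem, ht'pos⟩ : ∃ t' ∈ A, 0 < M t t' := by
      by_contra hcon
      push_neg at hcon
      have : pplus t = 0 := by
        rw [hpplus t]
        apply Finset.sum_eq_zero
        intro x hx
        rw [hA] at hcon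
        exact le_antisymm (hcon x hx) (hMnonneg t x)
      linarith
    refine ⟨t', ?_, ?_⟩
    · rw [hA] at ht'mem
      exact (mem_filter.mp ht'mem).2
    · have := hz t' (mem_univ t')
      have hsub : h t' - c = 0 := by
        rcases mul_eq_zero.mp this with h1 | h1
        · exact absurd h1 ht'pos.ne'
        · exact h1
      linarith
  -- downward induction: any minimizer forces c ≥ 0
  have main : ∀ k (t : Fin N → Bool), N - mcount t ≤ k → h t ≤ c → 0 ≤ c := by
    intro k
    induction k with
    | zero =>
      intro t hk hht
      have hNeq : mcount t = N := le_antisymm (hmle t) (by omega)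
      have ht : t = fun _ => true := hmN t hNeq
      have hzero : h t = 0 := by
        simp only [hh]
        rw [hNeq, ht, hρA]
        simp only [hg]
        rw [div_self hfPN.ne']
        ring
      linarith
    | succ k ih =>
      intro t hk hht
      by_cases h0 : mcount t = 0
      · have hzero : h t = ρ t := by
          simp only [hh, hg]
          rw [h0, hfP0]
          ring
        linarith [(hρ01 t).1]
      · by_cases hNt : mcount t = N
        · have ht : t = fun _ => true := hmN t hNt
          have hzero : h t = 0 := by
            simp only [hh]
            rw [hNt, ht, hρA]
            simp only [hg]
            rw [div_self hfPN.ne']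
            ring
          linarith
        · have hpos : 0 < mcount t := by omega
          have hlt : mcount t < N := lt_of_le_of_ne (hmle t) hNt
          obtain ⟨t', ht'c, ht'h⟩ := keyA t hpos hlt hht
          exact ih t' (by omega) ht'h
  obtain ⟨t0, -, hct0⟩ := Finset.exists_mem_eq_inf' hne h
  have h0c : 0 ≤ c := main N t0 (Nat.sub_le _ _) (le_of_eq hct0.symm)
  intro s hs0 hsN
  have hhs : h s = ρ s - g (mcount s) := rfl
  linarith [hcle s, h0c, hhs]
end

section
/- Symmetric comparison lemma: under the hypotheses of the sandwich lemma, if additionally Q is a birth-death chain on {0,…,N} with γ_s ≤ γ_m^Q for all s with |s| = m, then ρ_{|s|}^P ≤ ρ_s ≤ ρ_{|s|}^Q for every non-absorbing initial state s. -/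
/-!
Let `F = f / f(N)` with `f` the scale function of `P`. Since the mutant count moves by at most
one per step and `f(m) - f(m-1) = γᴾₘ (f(m+1) - f(m))`, the expected increment of `F(|X|)` from
an interior state `s` is `(p_{s;+} - γᴾ_{|s|} p_{s;−}) (F(|s|+1) - F(|s|)) ≥ 0`, so `F(|·|)` is
subharmonic; symmetrically the normalised scale function of `Q` is superharmonic. Both take the
boundary values of the harmonic function `ρ`, so the discrete comparison principle gives the two
bounds. It holds because a positive maximum of a subharmonic function propagates to states of
strictly larger mutant count, which is impossible at the top level.
-/

open Finset

lemma mcount_le {N : ℕ} (s : Fin N → Bool) : mcount s ≤ N := by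
  simpa [mcount] using card_filter_le univ fun i => s i = true

lemma eq_false_or_eq_true_of_not_mcount_pos_and_lt {N : ℕ} {s : Fin N → Bool}
    (h : ¬(0 < mcount s ∧ mcount s < N)) : s = (fun _ => false) ∨ s = (fun _ => true) := by
  rcases Nat.eq_zero_or_pos (mcount s) with h0 | h0
  · left
    simpa [mcount, filter_eq_empty_iff, funext_iff] using h0
  · right
    have hN : mcount s = N := le_antisymm (mcount_le s) (by omega)
    have : (univ.filter fun i => s i = true) = univ := by
      rw [← card_eq_iff_eq_univ]
      simpa [mcount] using hN
    simpa [filter_eq_self, funext_iff] using this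

section MaximumPrinciple

variable {σ : Type*} [Fintype σ]

lemma eq_of_le_sum_mul_of_forall_le {p w : σ → ℝ} {c : ℝ} (hp : ∀ i, 0 ≤ p i)
    (hp1 : ∑ i, p i = 1) (hw : ∀ i, w i ≤ c) (hc : c ≤ ∑ i, p i * w i) {i : σ}
    (hi : p i ≠ 0) : w i = c := by
  have hterm : ∀ j ∈ univ, 0 ≤ p j * (c - w j) :=
    fun j _ => mul_nonneg (hp j) (sub_nonneg.2 (hw j))
  have hsum : ∑ j, p j * (c - w j) = 0 := by
    refine le_antisymm ?_ (sum_nonneg hterm)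
    simp only [mul_sub, sum_sub_distrib, ← sum_mul, hp1, one_mul]
    linarith
  rcases mul_eq_zero.1 ((sum_eq_zero_iff_of_nonneg hterm).1 hsum i (mem_univ i)) with h | h
  · exact absurd h hi
  · linarith

variable {M : σ → σ → ℝ} (ℓ : σ → ℕ) (I : σ → Prop)

theorem maximum_principle (hM : ∀ s s', 0 ≤ M s s') (hrow : ∀ s, ∑ s', M s s' = 1)
    (hup : ∀ s, I s → ∃ s', ℓ s < ℓ s' ∧ M s s' ≠ 0) {w : σ → ℝ}
    (hbd : ∀ s, ¬I s → w s ≤ 0) (hw : ∀ s, I s → w s ≤ ∑ s', M s s' * w s') (s : σ) :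
    w s ≤ 0 := by
  classical
  obtain ⟨s₀, -, hs₀⟩ := exists_max_image univ w ⟨s, mem_univ s⟩
  by_contra! hpos
  obtain ⟨t, ht, htmax⟩ := exists_max_image (univ.filter fun t => w t = w s₀) ℓ ⟨s₀, by simp⟩
  have hwt : w t = w s₀ := (mem_filter.1 ht).2
  have hIt : I t := by
    by_contra h
    linarith [hbd t h, hs₀ s (mem_univ s)]
  obtain ⟨t', hlt, hM'⟩ := hup t hIt
  have hwt' : w t' = w s₀ :=
    eq_of_le_sum_mul_of_forall_le (hM t) (hrow t) (fun j => hs₀ j (mem_univ j))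
      (hwt ▸ hw t hIt) hM'
  exact absurd (htmax t' (by simp [hwt'])) (not_le.2 hlt)

theorem comparison_principle (hM : ∀ s s', 0 ≤ M s s') (hrow : ∀ s, ∑ s', M s s' = 1)
    (hup : ∀ s, I s → ∃ s', ℓ s < ℓ s' ∧ M s s' ≠ 0) {u v : σ → ℝ}
    (hbd : ∀ s, ¬I s → u s ≤ v s) (hu : ∀ s, I s → u s ≤ ∑ s', M s s' * u s')
    (hv : ∀ s, I s → ∑ s', M s s' * v s' ≤ v s) (s : σ) : u s ≤ v s := by
  refine sub_nonpos.1 (maximum_principle ℓ I hM hrow hup (w := u - v)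
    (fun s hs => sub_nonpos.2 (hbd s hs)) (fun s hs => ?_) s)
  simp only [Pi.sub_apply, mul_sub, sum_sub_distrib]
  linarith [hu s hs, hv s hs]

end MaximumPrinciple

section Drift

variable {σ : Type*} [Fintype σ] {M : σ → σ → ℝ} {ℓ : σ → ℕ}

lemma sum_mul_sub_eq_drift
    (hstep : ∀ s s', 1 < |(ℓ s' : ℤ) - (ℓ s : ℤ)| → M s s' = 0) (g : ℕ → ℝ) (s : σ) :
    ∑ s', M s s' * (g (ℓ s') - g (ℓ s)) =
      (∑ s' ∈ univ.filter fun s' => ℓ s' = ℓ s + 1, M s s') * (g (ℓ s + 1) - g (ℓ s)) -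
        (∑ s' ∈ univ.filter fun s' => ℓ s' + 1 = ℓ s, M s s') * (g (ℓ s) - g (ℓ s - 1)) := by
  rw [sum_filter, sum_filter, sum_mul, sum_mul, ← sum_sub_distrib]
  refine sum_congr rfl fun s' _ => ?_
  by_cases hup : ℓ s' = ℓ s + 1
  · rw [if_pos hup, if_neg (by omega), hup, zero_mul, sub_zero]
  by_cases hdown : ℓ s' + 1 = ℓ s
  · rw [if_neg hup, if_pos hdown, show ℓ s' = ℓ s - 1 by omega]
    ring
  by_cases heq : ℓ s' = ℓ s
  · simp [heq]
  rw [hstep s s' (by rw [lt_abs]; omega)]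
  simp [hup, hdown]

lemma sum_mul_eq_add_drift (hrow : ∀ s, ∑ s', M s s' = 1)
    (hstep : ∀ s s', 1 < |(ℓ s' : ℤ) - (ℓ s : ℤ)| → M s s' = 0) (g : ℕ → ℝ) (s : σ) :
    ∑ s', M s s' * g (ℓ s') = g (ℓ s) +
      (∑ s' ∈ univ.filter fun s' => ℓ s' = ℓ s + 1, M s s') * (g (ℓ s + 1) - g (ℓ s)) -
        (∑ s' ∈ univ.filter fun s' => ℓ s' + 1 = ℓ s, M s s') * (g (ℓ s) - g (ℓ s - 1)) := by
  rw [add_sub_assoc, ← sum_mul_sub_eq_drift hstep]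
  simp only [mul_sub, sum_sub_distrib, ← sum_mul, hrow, one_mul]
  ring

end Drift

noncomputable def scaleFun (γ : ℕ → ℝ) (m : ℕ) : ℝ := ∑ k ∈ range m, (∏ j ∈ range k, γ (j + 1))⁻¹

section ScaleFun

variable {γ : ℕ → ℝ}

@[simp]
lemma scaleFun_zero : scaleFun γ 0 = 0 := by
  simp [scaleFun]

lemma scaleFun_succ_sub (m : ℕ) :
    scaleFun γ (m + 1) - scaleFun γ m = (∏ j ∈ range m, γ (j + 1))⁻¹ := by
  simp [scaleFun, sum_range_succ]

lemma inv_prod_range_pos {m : ℕ} (hγ : ∀ j, 1 ≤ j → j ≤ m → 0 < γ j) :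
    0 < (∏ j ∈ range m, γ (j + 1))⁻¹ :=
  inv_pos.2 <| prod_pos fun j hj => hγ (j + 1) (by omega) (by simp at hj; omega)

lemma scaleFun_pos {n : ℕ} (hn : 0 < n) (hγ : ∀ j, 1 ≤ j → j ≤ n - 1 → 0 < γ j) :
    0 < scaleFun γ n :=
  sum_pos (fun k hk => inv_prod_range_pos fun j h1 h2 => hγ j h1 (by simp at hk; omega))
    ⟨0, by simpa using hn⟩

lemma scaleFun_sub_scaleFun_pred {m : ℕ} (hm : 0 < m) (hγ : γ m ≠ 0) :
    scaleFun γ m - scaleFun γ (m - 1) = γ m * (scaleFun γ (m + 1) - scaleFun γ m) := by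
  obtain ⟨k, rfl⟩ : ∃ k, m = k + 1 := ⟨m - 1, by omega⟩
  rw [Nat.add_sub_cancel, scaleFun_succ_sub, scaleFun_succ_sub, prod_range_succ, mul_inv,
    mul_left_comm, mul_inv_cancel₀ hγ, mul_one]

end ScaleFun

section ScaleFunDrift

variable {σ : Type*} [Fintype σ] {M : σ → σ → ℝ} {ℓ : σ → ℕ} {γ : ℕ → ℝ} {c : ℝ} {s : σ}

lemma sum_mul_scaleFun_div_eq (hrow : ∀ s, ∑ s', M s s' = 1)
    (hstep : ∀ s s', 1 < |(ℓ s' : ℤ) - (ℓ s : ℤ)| → M s s' = 0) (hs : 0 < ℓ s)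
    (hγ : γ (ℓ s) ≠ 0) :
    ∑ s', M s s' * (scaleFun γ (ℓ s') / c) = scaleFun γ (ℓ s) / c +
      ((∑ s' ∈ univ.filter fun s' => ℓ s' = ℓ s + 1, M s s') -
          γ (ℓ s) * ∑ s' ∈ univ.filter fun s' => ℓ s' + 1 = ℓ s, M s s') *
        ((scaleFun γ (ℓ s + 1) - scaleFun γ (ℓ s)) / c) := by
  rw [sum_mul_eq_add_drift hrow hstep (fun k => scaleFun γ k / c), ← sub_div, ← sub_div,
    scaleFun_sub_scaleFun_pred hs hγ]
  ring

lemma le_sum_mul_scaleFun_div (hrow : ∀ s, ∑ s', M s s' = 1)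
    (hstep : ∀ s s', 1 < |(ℓ s' : ℤ) - (ℓ s : ℤ)| → M s s' = 0) (hs : 0 < ℓ s)
    (hγ : ∀ j, 1 ≤ j → j ≤ ℓ s → 0 < γ j) (hc : 0 < c)
    (hbias : γ (ℓ s) * ∑ s' ∈ univ.filter (fun s' => ℓ s' + 1 = ℓ s), M s s' ≤
      ∑ s' ∈ univ.filter fun s' => ℓ s' = ℓ s + 1, M s s') :
    scaleFun γ (ℓ s) / c ≤ ∑ s', M s s' * (scaleFun γ (ℓ s') / c) := by
  rw [sum_mul_scaleFun_div_eq hrow hstep hs (hγ _ hs le_rfl).ne', scaleFun_succ_sub]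
  exact le_add_of_nonneg_right <|
    mul_nonneg (sub_nonneg.2 hbias) (div_nonneg (inv_prod_range_pos hγ).le hc.le)

lemma sum_mul_scaleFun_div_le (hrow : ∀ s, ∑ s', M s s' = 1)
    (hstep : ∀ s s', 1 < |(ℓ s' : ℤ) - (ℓ s : ℤ)| → M s s' = 0) (hs : 0 < ℓ s)
    (hγ : ∀ j, 1 ≤ j → j ≤ ℓ s → 0 < γ j) (hc : 0 < c)
    (hbias : ∑ s' ∈ univ.filter (fun s' => ℓ s' = ℓ s + 1), M s s' ≤
      γ (ℓ s) * ∑ s' ∈ univ.filter fun s' => ℓ s' + 1 = ℓ s, M s s') :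
    ∑ s', M s s' * (scaleFun γ (ℓ s') / c) ≤ scaleFun γ (ℓ s) / c := by
  rw [sum_mul_scaleFun_div_eq hrow hstep hs (hγ _ hs le_rfl).ne', scaleFun_succ_sub]
  exact add_le_of_nonpos_right <|
    mul_nonpos_of_nonpos_of_nonneg (sub_nonpos.2 hbias)
      (div_nonneg (inv_prod_range_pos hγ).le hc.le)

end ScaleFunDrift

theorem motion_comparison_sandwich_general (N : ℕ)
    (M : (Fin N → Bool) → (Fin N → Bool) → ℝ)
    (hMnonneg : ∀ s s', 0 ≤ M s s')
    (hMrow : ∀ s, ∑ s', M s s' = 1)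
    (hstep : ∀ s s' : Fin N → Bool,
      1 < |(mcount s' : ℤ) - (mcount s : ℤ)| → M s s' = 0)
    (pplus pminus : (Fin N → Bool) → ℝ)
    (hpplus : ∀ s, pplus s = ∑ s' ∈ univ.filter fun s' => mcount s' = mcount s + 1, M s s')
    (hpminus : ∀ s, pminus s = ∑ s' ∈ univ.filter fun s' => mcount s' + 1 = mcount s, M s s')
    (hppos : ∀ s, 0 < mcount s → mcount s < N → 0 < pplus s)
    (hmpos : ∀ s, 0 < mcount s → mcount s < N → 0 < pminus s)
    (γP γQ : ℕ → ℝ)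
    (hγPpos : ∀ m, 1 ≤ m → m ≤ N - 1 → 0 < γP m)
    (hγQpos : ∀ m, 1 ≤ m → m ≤ N - 1 → 0 < γQ m)
    (hbiasP : ∀ s, 0 < mcount s → mcount s < N → γP (mcount s) ≤ pplus s / pminus s)
    (hbiasQ : ∀ s, 0 < mcount s → mcount s < N → pplus s / pminus s ≤ γQ (mcount s))
    (ρ : (Fin N → Bool) → ℝ)
    (hρA : ρ (fun _ => true) = 1)
    (hρB : ρ (fun _ => false) = 0)
    (hρrec : ∀ s, 0 < mcount s → mcount s < N → ρ s = ∑ s', M s s' * ρ s')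
    (fP fQ : ℕ → ℝ)
    (hfP : ∀ m, fP m = ∑ k ∈ range m, (∏ j ∈ range k, γP (j + 1))⁻¹)
    (hfQ : ∀ m, fQ m = ∑ k ∈ range m, (∏ j ∈ range k, γQ (j + 1))⁻¹) :
    ∀ s, 0 < mcount s → mcount s < N →
      fP (mcount s) / fP N ≤ ρ s ∧ ρ s ≤ fQ (mcount s) / fQ N := by
  intro s hs0 hsN
  obtain rfl : fP = scaleFun γP := funext hfP
  obtain rfl : fQ = scaleFun γQ := funext hfQ
  let I : (Fin N → Bool) → Prop := fun t => 0 < mcount t ∧ mcount t < N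
  have hup (t) (ht : I t) : ∃ t', mcount t < mcount t' ∧ M t t' ≠ 0 := by
    obtain ⟨t', ht', hM⟩ := exists_ne_zero_of_sum_ne_zero (hpplus t ▸ hppos t ht.1 ht.2).ne'
    exact ⟨t', by simp only [mem_filter] at ht'; omega, hM⟩
  have hbd (γ : ℕ → ℝ) (hγ : 0 < scaleFun γ N) (t) (ht : ¬I t) :
      ρ t = scaleFun γ (mcount t) / scaleFun γ N := by
    rcases eq_false_or_eq_true_of_not_mcount_pos_and_lt ht with rfl | rfl
    · simp [hρB, mcount]
    · simp [hρA, mcount, hγ.ne']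
  have hfP := scaleFun_pos (hs0.trans hsN) hγPpos
  have hfQ := scaleFun_pos (hs0.trans hsN) hγQpos
  refine ⟨comparison_principle mcount I hMnonneg hMrow hup (fun t ht => (hbd γP hfP t ht).ge)
      (fun t ht => ?_) (fun t ht => (hρrec t ht.1 ht.2).ge) s,
    comparison_principle mcount I hMnonneg hMrow hup (fun t ht => (hbd γQ hfQ t ht).le)
      (fun t ht => (hρrec t ht.1 ht.2).le) (fun t ht => ?_) s⟩
  · refine le_sum_mul_scaleFun_div hMrow hstep ht.1 (fun j h1 h2 => hγPpos j h1 (by omega)) hfP ?_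
    rw [← hpplus, ← hpminus]
    exact (le_div_iff₀ (hmpos t ht.1 ht.2)).1 (hbiasP t ht.1 ht.2)
  · refine sum_mul_scaleFun_div_le hMrow hstep ht.1 (fun j h1 h2 => hγQpos j h1 (by omega)) hfQ ?_
    rw [← hpplus, ← hpminus]
    exact (div_le_iff₀ (hmpos t ht.1 ht.2)).1 (hbiasQ t ht.1 ht.2)

/-- Symmetric comparison (sandwich) lemma.  Let `{X_n}` be a Markov chain on `{A,B}^N`
changing the mutant count by at most one per step, with absorbing states all-A and all-B
and forward biases `γ_s = p_{s;+}/p_{s;−}`.  If `P` and `Q` are birth-death chains on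
`{0,…,N}` with biases `γ_m^P ≤ γ_s ≤ γ_m^Q` whenever `|s| = m`, then
`ρ_{|s|}^P ≤ ρ_s ≤ ρ_{|s|}^Q` for every non-absorbing initial state `s`, where the
one-dimensional absorption probabilities are `ρ_m = f(m)/f(N)` with
`f(m) = Σ_{k=0}^{m−1} (γ_1⋯γ_k)⁻¹`. -/
theorem motion_comparison_sandwich (N : ℕ) (hN : 0 < N)
    (M : (Fin N → Bool) → (Fin N → Bool) → ℝ)
    (hMnonneg : ∀ s s', 0 ≤ M s s')
    (hMrow : ∀ s, ∑ s', M s s' = 1)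
    (hstep : ∀ s s' : Fin N → Bool,
      1 < |(mcount s' : ℤ) - (mcount s : ℤ)| → M s s' = 0)
    (pplus pminus : (Fin N → Bool) → ℝ)
    (hpplus : ∀ s, pplus s = ∑ s' ∈ univ.filter fun s' => mcount s' = mcount s + 1, M s s')
    (hpminus : ∀ s, pminus s = ∑ s' ∈ univ.filter fun s' => mcount s' + 1 = mcount s, M s s')
    (hppos : ∀ s, 0 < mcount s → mcount s < N → 0 < pplus s)
    (hmpos : ∀ s, 0 < mcount s → mcount s < N → 0 < pminus s)
    (hnolazy : ∀ s, 0 < mcount s → mcount s < N → pplus s + pminus s = 1)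
    (γP γQ : ℕ → ℝ)
    (hγPpos : ∀ m, 1 ≤ m → m ≤ N - 1 → 0 < γP m)
    (hγQpos : ∀ m, 1 ≤ m → m ≤ N - 1 → 0 < γQ m)
    (hbiasP : ∀ s, 0 < mcount s → mcount s < N → γP (mcount s) ≤ pplus s / pminus s)
    (hbiasQ : ∀ s, 0 < mcount s → mcount s < N → pplus s / pminus s ≤ γQ (mcount s))
    (ρ : (Fin N → Bool) → ℝ)
    (hρ01 : ∀ s, 0 ≤ ρ s ∧ ρ s ≤ 1)
    (hρA : ρ (fun _ => true) = 1)
    (hρB : ρ (fun _ => false) = 0)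
    (hρrec : ∀ s, 0 < mcount s → mcount s < N → ρ s = ∑ s', M s s' * ρ s')
    (fP fQ : ℕ → ℝ)
    (hfP : ∀ m, fP m = ∑ k ∈ range m, (∏ j ∈ range k, γP (j + 1))⁻¹)
    (hfQ : ∀ m, fQ m = ∑ k ∈ range m, (∏ j ∈ range k, γQ (j + 1))⁻¹) :
    ∀ s, 0 < mcount s → mcount s < N →
      fP (mcount s) / fP N ≤ ρ s ∧ ρ s ≤ fQ (mcount s) / fQ N :=
  motion_comparison_sandwich_general N M hMnonneg hMrow hstep pplus pminus hpplus hpminus hppos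
    hmpos γP γQ hγPpos hγQpos hbiasP hbiasQ ρ hρA hρB hρrec fP fQ hfP hfQ
end

section
/- For death-birth updating on the cycle with r ≥ 1, every non-absorbing state s with 1 < |s| < N−1 mutants satisfies 1 ≤ γ(s) ≤ r, where r is the bias of the single-cluster configuration with the same number of mutants. -/
/-!
Write `K` for the common number of mutant and resident clusters and `c = 2/(1+r) ≤ 1 ≤ d = 2r/(1+r)`,
so that `d / c = r`. Lowering the weight of the mutant clusters and raising that of the resident
clusters moves the denominator of `γ` below `K` and the numerator above it, whence `1 ≤ γ`.
Conversely the numerator is at most `d K`, while `r` times the denominator is `r xA + d yA ≥ d K`.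
-/

/-- The death-birth forward bias on the cycle:
`γ = (xB + (2r/(1+r))·yB)/(xA + (2/(1+r))·yA)`. -/
noncomputable def dbBias (r : ℝ) (xA yA xB yB : ℕ) : ℝ :=
  ((xB : ℝ) + (2 * r / (1 + r)) * yB) / ((xA : ℝ) + (2 / (1 + r)) * yA)

section ReweightedRatio

variable {x y x' y' c d : ℝ}

theorem one_le_reweighted_ratio (hx : 0 ≤ x) (hy : 0 ≤ y) (hy' : 0 ≤ y')
    (hsum : x + y = x' + y') (hpos : 0 < x + y) (hc0 : 0 < c) (hc1 : c ≤ 1) (hd : 1 ≤ d) :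
    1 ≤ (x' + d * y') / (x + c * y) := by
  have hden : 0 < x + c * y := by nlinarith
  rw [one_le_div hden]
  calc x + c * y ≤ x + y := by nlinarith
    _ = x' + y' := hsum
    _ ≤ x' + d * y' := by nlinarith

theorem reweighted_ratio_le_div (hx : 0 ≤ x) (hy : 0 ≤ y) (hx' : 0 ≤ x') (hsum : x + y = x' + y')
    (hc0 : 0 < c) (hc1 : c ≤ 1) (hd : 1 ≤ d) :
    (x' + d * y') / (x + c * y) ≤ d / c := by
  have hdc : d ≤ d / c := le_div_self (by linarith) hc0 hc1
  refine div_le_of_le_mul₀ (by positivity) (by linarith) ?_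
  calc x' + d * y' ≤ d * (x' + y') := by nlinarith
    _ = d * x + d * y := by rw [← hsum]; ring
    _ ≤ d / c * x + d * y := by gcongr
    _ = d / c * (x + c * y) := by field_simp

end ReweightedRatio

section Weights

variable {r : ℝ}

theorem two_div_one_add_le_one (hr : 1 ≤ r) : 2 / (1 + r) ≤ 1 := by
  rw [div_le_one (by linarith)]
  linarith

theorem one_le_two_mul_div_one_add (hr : 1 ≤ r) : 1 ≤ 2 * r / (1 + r) := by
  rw [le_div_iff₀ (by linarith)]
  linarith

theorem two_mul_div_one_add_div_two_div_one_add (hr : 1 + r ≠ 0) :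
    2 * r / (1 + r) / (2 / (1 + r)) = r := by
  field_simp

end Weights

theorem dbBias_zero_one_zero_one {r : ℝ} (hr : 1 + r ≠ 0) : dbBias r 0 1 0 1 = r := by
  simpa [dbBias] using two_mul_div_one_add_div_two_div_one_add hr

theorem db_bias_bounds_advantageous_general (xA yA xB yB : ℕ) (r : ℝ)
    (hr : 1 ≤ r)
    (hclusters : xA + yA = xB + yB) (hcl1 : 1 ≤ xA + yA) :
    (1 ≤ dbBias r xA yA xB yB ∧ dbBias r xA yA xB yB ≤ r) ∧
      dbBias r 0 1 0 1 = r := by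
  have hr0 : 0 < 1 + r := by linarith
  have hc0 : 0 < 2 / (1 + r) := by positivity
  have hc1 := two_div_one_add_le_one hr
  have hd := one_le_two_mul_div_one_add hr
  have hsum : (xA : ℝ) + yA = xB + yB := by exact_mod_cast hclusters
  have hpos : (0 : ℝ) < xA + yA := by exact_mod_cast hcl1
  refine ⟨⟨?_, ?_⟩, dbBias_zero_one_zero_one hr0.ne'⟩
  · exact one_le_reweighted_ratio (by positivity) (by positivity) (by positivity) hsum hpos hc0
      hc1 hd
  · calc dbBias r xA yA xB yB ≤ 2 * r / (1 + r) / (2 / (1 + r)) :=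
          reweighted_ratio_le_div (by positivity) (by positivity) (by positivity) hsum hc0 hc1 hd
      _ = r := two_mul_div_one_add_div_two_div_one_add hr0.ne'

/-- For death-birth updating on the cycle with `r ≥ 1`, every non-absorbing state with
`1 < m < N−1` mutants satisfies `1 ≤ γ(s) ≤ r`, where `r` is the bias of the
single-cluster configuration (`xA = xB = 0`, `yA = yB = 1`) with the same number of
mutants. -/
theorem db_bias_bounds_advantageous (N m xA yA xB yB : ℕ) (r : ℝ)
    (hr : 1 ≤ r)
    (hm1 : 1 < m) (hm2 : m < N - 1)
    (hclusters : xA + yA = xB + yB) (hcl1 : 1 ≤ xA + yA)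
    (hsizeA : xA + 2 * yA ≤ m) (hsizeB : xB + 2 * yB ≤ N - m) :
    (1 ≤ dbBias r xA yA xB yB ∧ dbBias r xA yA xB yB ≤ r) ∧
      dbBias r 0 1 0 1 = r :=
  db_bias_bounds_advantageous_general xA yA xB yB r hr hclusters hcl1
end

section
/- For death-birth updating on the cycle with 0 < r ≤ 1, every non-absorbing state s with 1 < |s| < N−1 mutants satisfies r ≤ γ(s) ≤ 1. -/
/-- For death-birth updating on the cycle with `0 < r ≤ 1`, every non-absorbing state
with `1 < m < N−1` mutants satisfies `r ≤ γ(s) ≤ 1`. -/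
theorem db_bias_bounds_disadvantageous (N m xA yA xB yB : ℕ) (r : ℝ)
    (hr0 : 0 < r) (hr1 : r ≤ 1)
    (hm1 : 1 < m) (hm2 : m < N - 1)
    (hclusters : xA + yA = xB + yB) (hcl1 : 1 ≤ xA + yA)
    (hsizeA : xA + 2 * yA ≤ m) (hsizeB : xB + 2 * yB ≤ N - m) :
    r ≤ dbBias r xA yA xB yB ∧ dbBias r xA yA xB yB ≤ 1 := by
  have hr1p : (0:ℝ) < 1 + r := by linarith
  have hcast : (xA:ℝ) + yA = (xB:ℝ) + yB := by exact_mod_cast congrArg (Nat.cast (R := ℝ)) hclusters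
  have hcl1' : (1:ℝ) ≤ (xA:ℝ) + yA := by exact_mod_cast hcl1
  have hxA : (0:ℝ) ≤ (xA:ℝ) := Nat.cast_nonneg _
  have hyA : (0:ℝ) ≤ (yA:ℝ) := Nat.cast_nonneg _
  have hxB : (0:ℝ) ≤ (xB:ℝ) := Nat.cast_nonneg _
  have hyB : (0:ℝ) ≤ (yB:ℝ) := Nat.cast_nonneg _
  have hfrac : (1:ℝ) ≤ 2 / (1 + r) := by
    rw [le_div_iff₀ hr1p]; linarith
  have hD : 0 < (xA:ℝ) + 2 / (1 + r) * yA := by nlinarith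
  constructor
  · rw [dbBias, le_div_iff₀ hD, ← sub_nonneg]
    have key : r * ((xA:ℝ) + 2 / (1 + r) * yA) - ((xB:ℝ) + 2 * r / (1 + r) * yB)
        = (r * xA * (1 + r) + 2 * r * yA - xB * (1 + r) - 2 * r * yB) / (1 + r) := by
      field_simp; ring
    rw [show (↑xB + 2 * r / (1 + r) * ↑yB) - r * (↑xA + 2 / (1 + r) * ↑yA)
        = -(r * ((xA:ℝ) + 2 / (1 + r) * yA) - ((xB:ℝ) + 2 * r / (1 + r) * yB)) by ring,
      key, neg_nonneg]
    apply div_nonpos_of_nonpos_of_nonneg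
    · nlinarith [mul_nonneg hxA hr0.le, mul_nonneg hyA hr0.le]
    · linarith
  · rw [dbBias, div_le_one hD, ← sub_nonneg]
    have key : ((xA:ℝ) + 2 / (1 + r) * yA) - ((xB:ℝ) + 2 * r / (1 + r) * yB)
        = (xA * (1 + r) + 2 * yA - xB * (1 + r) - 2 * r * yB) / (1 + r) := by
      field_simp; ring
    rw [key]
    apply div_nonneg _ hr1p.le
    nlinarith [mul_nonneg hyB hr0.le]
end

section
/- Motion suppresses selection on the cycle under death-birth updating: for an advantageous mutant (r > 1), the fixation probability from any non-absorbing state s of the process with arbitrary shuffling between updates is at most the fixation probability of the one-dimensional comparison chain with bias γ_m = r for 1 < m < N−1 (and the appropriate boundary biases at m = 1 and m = N−1); formally, since every state s with |s| = m has bias γ_s ≤ γ_m^Q where Q is the single-cluster chain, ρ_s ≤ ρ_{|s|}^Q by the comparison lemma. -/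
open Finset

/-- Motion suppresses selection on the cycle under death-birth updating.  Consider the
process on `{A,B}^N` in which each step consists of an arbitrary stochastic shuffle
followed by a DB update on the cycle (encoded by its transition matrix `M`, which
changes the mutant count by at most one per step).  For an advantageous mutant
(`r > 1`), every non-absorbing state `s` has forward bias `γ_s ≤ γ_{|s|}^Q` (and
`1 ≤ γ_s`), where `Q` is the one-dimensional comparison chain whose bias is the
single-cluster DB bias, equal to `r` for `1 < m < N−1` (with the appropriate boundary
biases at `m = 1` and `m = N−1`).  Then the fixation probability from any non-absorbing
state `s` is at most that of the comparison chain: `ρ_s ≤ ρ_{|s|}^Q = f_Q(|s|)/f_Q(N)`. -/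
theorem motion_suppresses_selection_cycle_DB (N : ℕ) (hN : 0 < N) (r : ℝ) (hr : 1 < r)
    (M : (Fin N → Bool) → (Fin N → Bool) → ℝ)
    (hMnonneg : ∀ s s', 0 ≤ M s s')
    (hMrow : ∀ s, ∑ s', M s s' = 1)
    (hstep : ∀ s s' : Fin N → Bool,
      1 < |(mcount s' : ℤ) - (mcount s : ℤ)| → M s s' = 0)
    (pplus pminus : (Fin N → Bool) → ℝ)
    (hpplus : ∀ s, pplus s = ∑ s' ∈ univ.filter fun s' => mcount s' = mcount s + 1, M s s')
    (hpminus : ∀ s, pminus s = ∑ s' ∈ univ.filter fun s' => mcount s' + 1 = mcount s, M s s')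
    (hppos : ∀ s, 0 < mcount s → mcount s < N → 0 < pplus s)
    (hmpos : ∀ s, 0 < mcount s → mcount s < N → 0 < pminus s)
    (hnolazy : ∀ s, 0 < mcount s → mcount s < N → pplus s + pminus s = 1)
    (γQ : ℕ → ℝ)
    (hγQpos : ∀ m, 1 ≤ m → m ≤ N - 1 → 0 < γQ m)
    (hγQr : ∀ m, 1 < m → m < N - 1 → γQ m = r)
    (hbiasLow : ∀ s, 0 < mcount s → mcount s < N → 1 ≤ pplus s / pminus s)
    (hbiasQ : ∀ s, 0 < mcount s → mcount s < N → pplus s / pminus s ≤ γQ (mcount s))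
    (ρ : (Fin N → Bool) → ℝ)
    (hρ01 : ∀ s, 0 ≤ ρ s ∧ ρ s ≤ 1)
    (hρA : ρ (fun _ => true) = 1)
    (hρB : ρ (fun _ => false) = 0)
    (hρrec : ∀ s, 0 < mcount s → mcount s < N → ρ s = ∑ s', M s s' * ρ s')
    (fQ : ℕ → ℝ)
    (hfQ : ∀ m, fQ m = ∑ k ∈ range m, (∏ j ∈ range k, γQ (j + 1))⁻¹) :
    ∀ s, 0 < mcount s → mcount s < N → ρ s ≤ fQ (mcount s) / fQ N := by
  classical
  set g : ℕ → ℝ := fun m => fQ m / fQ N with hgdef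
  have hprodpos : ∀ k, k < N → 0 < ∏ j ∈ range k, γQ (j + 1) := by
    intro k hk
    apply Finset.prod_pos
    intro j hj
    have hj' := Finset.mem_range.mp hj
    exact hγQpos (j + 1) (by omega) (by omega)
  have hfQpos : ∀ m, 0 < m → m ≤ N → 0 < fQ m := by
    intro m hm hmN
    rw [hfQ]
    apply Finset.sum_pos
    · intro k hk
      exact inv_pos.mpr (hprodpos k (lt_of_lt_of_le (Finset.mem_range.mp hk) hmN))
    · exact Finset.nonempty_range_iff.mpr (by omega)
  have hfQN : 0 < fQ N := hfQpos N hN le_rfl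
  have hg0 : g 0 = 0 := by simp [hgdef, hfQ 0]
  have hgN : g N = 1 := div_self (ne_of_gt hfQN)
  have hmle : ∀ s : Fin N → Bool, mcount s ≤ N := by
    intro s
    have := Finset.card_filter_le (univ : Finset (Fin N)) (fun i => s i = true)
    simpa [mcount] using this
  have hmN_eq : ∀ s : Fin N → Bool, mcount s = N → s = fun _ => true := by
    intro s hs
    funext i
    have huniv : (univ.filter fun i => s i = true) = univ := by
      apply Finset.eq_univ_of_card
      exact hs.trans (Fintype.card_fin N).symm
    have : i ∈ univ.filter fun i => s i = true := by
      rw [huniv]; exact Finset.mem_univ i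
    exact (Finset.mem_filter.mp this).2
  have hm0_eq : ∀ s : Fin N → Bool, mcount s = 0 → s = fun _ => false := by
    intro s hs
    funext i
    have hemp : (univ.filter fun i => s i = true) = ∅ := Finset.card_eq_zero.mp hs
    cases hsi : s i with
    | false => rfl
    | true =>
      exfalso
      have : i ∈ univ.filter fun i => s i = true := by
        simp [hsi]
      rw [hemp] at this
      exact absurd this (Finset.notMem_empty i)
  -- disjointness of the two neighbor filters
  have hdisj : ∀ m : ℕ, Disjoint (univ.filter fun t : Fin N → Bool => mcount t = m + 1)
      (univ.filter fun t => mcount t + 1 = m) := by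
    intro m
    rw [Finset.disjoint_left]
    intro t ht1 ht2
    have h1 := (Finset.mem_filter.mp ht1).2
    have h2 := (Finset.mem_filter.mp ht2).2
    omega
  -- M vanishes outside the two neighbor filters
  have hMzero : ∀ s, 0 < mcount s → mcount s < N →
      ∀ s', mcount s' ≠ mcount s + 1 → mcount s' + 1 ≠ mcount s → M s s' = 0 := by
    intro s h1 h2 s' hne1 hne2
    set m := mcount s with hm
    set F := (univ.filter fun t : Fin N → Bool => mcount t = m + 1) ∪
      (univ.filter fun t => mcount t + 1 = m) with hF
    have hsumF : ∑ t ∈ F, M s t = 1 := by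
      rw [hF, Finset.sum_union (hdisj m), ← hpplus s, ← hpminus s]
      exact hnolazy s h1 h2
    have hrest : ∑ t ∈ (univ : Finset (Fin N → Bool)) \ F, M s t = 0 := by
      have := Finset.sum_sdiff (f := M s) (Finset.subset_univ F)
      rw [hsumF, hMrow s] at this
      linarith
    have hmem : s' ∈ (univ : Finset (Fin N → Bool)) \ F := by
      rw [Finset.mem_sdiff]
      refine ⟨Finset.mem_univ _, ?_⟩
      rw [hF, Finset.mem_union]
      rintro (h | h)
      · exact hne1 (Finset.mem_filter.mp h).2
      · exact hne2 (Finset.mem_filter.mp h).2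
    exact (Finset.sum_eq_zero_iff_of_nonneg (fun t _ => hMnonneg s t)).mp hrest s' hmem
  -- sum decomposition over neighbor counts
  have hsumdecomp : ∀ (φ : (Fin N → Bool) → ℝ) (s), 0 < mcount s → mcount s < N →
      ∑ s', M s s' * φ s' =
        (∑ s' ∈ univ.filter fun t => mcount t = mcount s + 1, M s s' * φ s') +
        (∑ s' ∈ univ.filter fun t => mcount t + 1 = mcount s, M s s' * φ s') := by
    intro φ s h1 h2
    rw [← Finset.sum_union (hdisj (mcount s))]
    symm
    apply Finset.sum_subset (Finset.subset_univ _)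
    intro t _ htF
    rw [Finset.mem_union] at htF
    push_neg at htF
    have hz : M s t = 0 := by
      apply hMzero s h1 h2 t
      · intro hc
        exact htF.1 (Finset.mem_filter.mpr ⟨Finset.mem_univ _, hc⟩)
      · intro hc
        exact htF.2 (Finset.mem_filter.mpr ⟨Finset.mem_univ _, hc⟩)
    rw [hz, zero_mul]
  -- key superharmonicity of g ∘ mcount
  have hkey : ∀ s, 0 < mcount s → mcount s < N →
      ∑ s', M s s' * g (mcount s') ≤ g (mcount s) := by
    intro s h1 h2
    obtain ⟨m', hm'⟩ : ∃ m', mcount s = m' + 1 := ⟨mcount s - 1, by omega⟩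
    rw [hsumdecomp (fun t => g (mcount t)) s h1 h2]
    have e1 : (∑ s' ∈ univ.filter fun t => mcount t = mcount s + 1, M s s' * g (mcount s'))
        = pplus s * g (mcount s + 1) := by
      rw [hpplus, Finset.sum_mul]
      apply Finset.sum_congr rfl
      intro t ht
      rw [(Finset.mem_filter.mp ht).2]
    have e2 : (∑ s' ∈ univ.filter fun t => mcount t + 1 = mcount s, M s s' * g (mcount s'))
        = pminus s * g m' := by
      rw [hpminus, Finset.sum_mul]
      apply Finset.sum_congr rfl
      intro t ht
      have := (Finset.mem_filter.mp ht).2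
      have hmt : mcount t = m' := by omega
      rw [hmt]
    rw [e1, e2, hm']
    -- now arithmetic
    set p := pplus s with hp
    set q := pminus s with hq
    have hqpos : 0 < q := hmpos s h1 h2
    have hpq : p + q = 1 := hnolazy s h1 h2
    have hγ : 0 < γQ (m' + 1) := hγQpos (m' + 1) (by omega) (by omega)
    have hple : p ≤ γQ (m' + 1) * q := by
      have := hbiasQ s h1 h2
      rw [hm'] at this
      calc p = (p / q) * q := by field_simp
      _ ≤ γQ (m' + 1) * q := by
        apply mul_le_mul_of_nonneg_right this (le_of_lt hqpos)
    set P := ∏ j ∈ range m', γQ (j + 1) with hPdef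
    have hP : 0 < P := hprodpos m' (by omega)
    have e3 : fQ (m' + 1 + 1) = fQ (m' + 1) + (P * γQ (m' + 1))⁻¹ := by
      rw [hfQ (m' + 1 + 1), hfQ (m' + 1), Finset.sum_range_succ, Finset.prod_range_succ]
    have e4 : fQ (m' + 1) = fQ m' + P⁻¹ := by
      rw [hfQ (m' + 1), hfQ m', Finset.sum_range_succ]
    have h6 : p * (γQ (m' + 1))⁻¹ ≤ q := by
      rw [← div_eq_mul_inv, div_le_iff₀ hγ]
      linarith [hple]
    have hfq : p * fQ (m' + 1 + 1) + q * fQ m' ≤ fQ (m' + 1) := by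
      rw [e3, e4, mul_inv]
      have h7 : P⁻¹ * (p * (γQ (m' + 1))⁻¹) ≤ P⁻¹ * q :=
        mul_le_mul_of_nonneg_left h6 (le_of_lt (inv_pos.mpr hP))
      have e5 : p * fQ m' + q * fQ m' = fQ m' := by rw [← add_mul, hpq, one_mul]
      have e6 : p * P⁻¹ + q * P⁻¹ = P⁻¹ := by rw [← add_mul, hpq, one_mul]
      nlinarith [h7, e5, e6]
    have egoal : p * g (m' + 1 + 1) + q * g m'
        = (p * fQ (m' + 1 + 1) + q * fQ m') / fQ N := by
      simp only [hgdef]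
      ring
    rw [egoal]
    calc (p * fQ (m' + 1 + 1) + q * fQ m') / fQ N ≤ fQ (m' + 1) / fQ N :=
          div_le_div_of_nonneg_right hfq hfQN.le
    _ = g (m' + 1) := rfl
  -- the comparison function h and its maximum
  set h : (Fin N → Bool) → ℝ := fun s => ρ s - g (mcount s) with hhdef
  obtain ⟨s₀, -, hs₀⟩ := Finset.exists_max_image (univ : Finset (Fin N → Bool)) h
    ⟨(fun _ => true), Finset.mem_univ _⟩
  set C := h s₀ with hCdef
  have hle : ∀ s, h s ≤ C := fun s => hs₀ s (Finset.mem_univ s)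
  -- equality-case propagation
  have hstep' : ∀ s, 0 < mcount s → mcount s < N → h s = C →
      ∃ s', mcount s' = mcount s + 1 ∧ h s' = C := by
    intro s h1 h2 hsC
    have hsub : h s ≤ ∑ s', M s s' * h s' := by
      have e : ∑ s', M s s' * h s'
          = (∑ s', M s s' * ρ s') - ∑ s', M s s' * g (mcount s') := by
        rw [← Finset.sum_sub_distrib]
        apply Finset.sum_congr rfl
        intro t _
        simp only [hhdef]
        ring
      rw [e, ← hρrec s h1 h2]
      have := hkey s h1 h2
      simp only [hhdef]
      linarith
    have hzsum : ∑ s', M s s' * (C - h s') = 0 := by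
      have e : ∑ s', M s s' * (C - h s') = C - ∑ s', M s s' * h s' := by
        have : ∑ s', M s s' * (C - h s') = (∑ s', M s s' * C) - ∑ s', M s s' * h s' := by
          rw [← Finset.sum_sub_distrib]
          apply Finset.sum_congr rfl
          intro t _
          ring
        rw [this, ← Finset.sum_mul, hMrow s, one_mul]
      rw [e]
      have hge : C ≤ ∑ s', M s s' * h s' := le_trans (le_of_eq hsC.symm) hsub
      have hle2 : ∑ s', M s s' * h s' ≤ C := by
        calc ∑ s', M s s' * h s' ≤ ∑ s', M s s' * C := by
              apply Finset.sum_le_sum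
              intro t _
              exact mul_le_mul_of_nonneg_left (hle t) (hMnonneg s t)
        _ = C := by rw [← Finset.sum_mul, hMrow s, one_mul]
      linarith
    have hall : ∀ s', M s s' * (C - h s') = 0 := by
      intro s'
      have := (Finset.sum_eq_zero_iff_of_nonneg ?_).mp hzsum s' (Finset.mem_univ s')
      · exact this
      · intro t _
        exact mul_nonneg (hMnonneg s t) (by linarith [hle t])
    have hp : 0 < pplus s := hppos s h1 h2
    rw [hpplus] at hp
    obtain ⟨s', hs'mem, hMne⟩ :
        ∃ s' ∈ univ.filter fun t => mcount t = mcount s + 1, M s s' ≠ 0 := by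
      by_contra hcon
      push_neg at hcon
      rw [Finset.sum_eq_zero hcon] at hp
      exact lt_irrefl 0 hp
    refine ⟨s', (Finset.mem_filter.mp hs'mem).2, ?_⟩
    rcases mul_eq_zero.mp (hall s') with hz | hz
    · exact absurd hz hMne
    · linarith
  -- boundary values of h
  have htrue : h (fun _ => true) = 0 := by
    have hm : mcount (fun _ : Fin N => true) = N := by
      simp [mcount]
    simp only [hhdef, hm, hρA, hgN]
    ring
  have hfalse : h (fun _ => false) = 0 := by
    have hm : mcount (fun _ : Fin N => false) = 0 := by
      simp [mcount]
    simp only [hhdef, hm, hρB, hg0]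
    ring
  -- induction pushing the maximum up to N
  have hCle : ∀ k, ∀ s : Fin N → Bool, N - mcount s ≤ k → h s = C → C ≤ 0 := by
    intro k
    induction k with
    | zero =>
      intro s hk hsC
      have hm : mcount s = N := by
        have := hmle s
        omega
      rw [hmN_eq s hm] at hsC
      rw [← hsC, htrue]
    | succ k ih =>
      intro s hk hsC
      rcases Nat.eq_zero_or_pos (mcount s) with h0 | h1
      · rw [hm0_eq s h0] at hsC
        rw [← hsC, hfalse]
      rcases eq_or_lt_of_le (hmle s) with hNe | h2
      · rw [hmN_eq s hNe] at hsC
        rw [← hsC, htrue]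
      · obtain ⟨s', hs'm, hs'C⟩ := hstep' s h1 h2 hsC
        exact ih s' (by omega) hs'C
  have hC0 : C ≤ 0 := hCle N s₀ (Nat.sub_le _ _) rfl
  intro s h1 h2
  have hhs := hle s
  have : ρ s ≤ g (mcount s) := by
    simp only [hhdef] at hhs
    linarith
  simpa [hgdef] using this
end
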